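/- Let ε be a real-valued random variable with a continuous distribution whose median is 0, i.e. P(ε ≤ 0) = 1/2 and P(ε = 0) = 0. Then for any real a > 0, E[sign(max(0, a + ε) − max(0, a))] = 0. -/

import Mathlib

open MeasureTheory

/-- If `ε` has a continuous distribution with median 0, i.e. `P(ε ≤ 0) = 1/2`
and `P(ε = 0) = 0`, then for any `a > 0`,
`E[sign(max(0, a + ε) − max(0, a))] = 0`. -/
theorem expectation_sign_censored_score_eq_zero
    {Ω : Type*} [MeasurableSpace Ω] (μ : Measure Ω) [IsProbabilityMeasure μ]
    (ε : Ω → ℝ) (hmeas : Measurable ε)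
    (hmed : μ {ω | ε ω ≤ 0} = 1 / 2)
    (hcont : μ {ω | ε ω = 0} = 0)
    (a : ℝ) (ha : 0 < a) :
    ∫ ω, Real.sign (max 0 (a + ε ω) - max 0 a) ∂μ = 0 := by
  have key : ∀ ω, Real.sign (max 0 (a + ε ω) - max 0 a) = Real.sign (ε ω) := by
    intro ω
    rcases lt_trichotomy (ε ω) 0 with h | h | h
    · rw [Real.sign_of_neg h, Real.sign_of_neg]
      have hmax : max 0 a = a := max_eq_right ha.le
      rw [hmax, sub_neg]
      exact max_lt ha (by linarith)
    · simp [h, max_eq_right ha.le]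
    · rw [Real.sign_of_pos h, Real.sign_of_pos]
      rw [max_eq_right ha.le, max_eq_right (by linarith : (0:ℝ) ≤ a + ε ω)]
      linarith
  simp_rw [key]
  -- rewrite sign as difference of indicators
  have hfun : ∀ ω, Real.sign (ε ω) =
      Set.indicator {ω | 0 < ε ω} (fun _ => (1:ℝ)) ω
        - Set.indicator {ω | ε ω < 0} (fun _ => (1:ℝ)) ω := by
    intro ω
    rcases lt_trichotomy (ε ω) 0 with h | h | h
    · rw [Real.sign_of_neg h,
        Set.indicator_of_notMem (by simp [Set.mem_setOf_eq]; linarith),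
        Set.indicator_of_mem (by exact h)]
      ring
    · simp [h]
    · rw [Real.sign_of_pos h, Set.indicator_of_mem (by exact h),
        Set.indicator_of_notMem (by simp [Set.mem_setOf_eq]; linarith)]
      ring
  simp_rw [hfun]
  have hspos : MeasurableSet {ω | 0 < ε ω} := measurableSet_lt measurable_const hmeas
  have hsneg : MeasurableSet {ω | ε ω < 0} := measurableSet_lt hmeas measurable_const
  have hipos : Integrable (Set.indicator {ω | 0 < ε ω} (fun _ => (1:ℝ))) μ :=
    (integrable_const (1:ℝ)).indicator hspos
  have hineg : Integrable (Set.indicator {ω | ε ω < 0} (fun _ => (1:ℝ))) μ :=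
    (integrable_const (1:ℝ)).indicator hsneg
  rw [integral_sub hipos hineg, integral_indicator_const _ hspos,
    integral_indicator_const _ hsneg]
  -- compute the measures
  have hneg : μ {ω | ε ω < 0} = 1 / 2 := by
    have hsplit : {ω | ε ω ≤ 0} = {ω | ε ω < 0} ∪ {ω | ε ω = 0} := by
      ext ω; simp [Set.mem_setOf_eq, le_iff_lt_or_eq]
    have := measure_union_le (μ := μ) {ω | ε ω < 0} {ω | ε ω = 0}
    have hle : μ {ω | ε ω ≤ 0} ≤ μ {ω | ε ω < 0} + μ {ω | ε ω = 0} := by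
      rw [hsplit]; exact this
    have hge : μ {ω | ε ω < 0} ≤ μ {ω | ε ω ≤ 0} :=
      measure_mono (fun ω (h : ε ω < 0) => le_of_lt h)
    rw [hmed, hcont, add_zero] at hle
    rw [hmed] at hge
    exact le_antisymm hge hle
  have hpos : μ {ω | 0 < ε ω} = 1 / 2 := by
    have hcompl : {ω | 0 < ε ω} = {ω | ε ω ≤ 0}ᶜ := by
      ext ω; simp [Set.mem_setOf_eq, not_le]
    rw [hcompl, measure_compl (measurableSet_le hmeas measurable_const) (measure_ne_top μ _),
      measure_univ, hmed]
    rw [ENNReal.sub_eq_of_eq_add (by norm_num)]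
    exact (ENNReal.add_halves 1).symm
  rw [measureReal_def, measureReal_def, hpos, hneg]
  simp
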